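/- arXiv:0707.0837 — 2 statements merged into one kernel-verified Lean document; each statement's English description precedes it below -/
import Mathlib

section
/- Let N be a positive integer and let k be an integer with 1 ≤ k ≤ N. Then for every x ∈ (0, k/N), ∑_{j=0}^{k−1} C(N,j) x^j (1−x)^(N−j) ≥ 1 − exp(− N (x − k/N)² / (2 ((2/3)x + k/(3N)) (1 − (2/3)x − k/(3N)))). -/
/-!
The upper tail of `Bin(N, x)` beyond `k = aN` obeys the Chernoff bound `exp (-N D(a ‖ x))`, with
`D` the relative entropy of Bernoulli laws, and `D(a ‖ x) ≥ (a - x)² / (2 p (1 - p))` for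
`p = (2x + a) / 3`. The latter holds because, as a function of `x ∈ [0, a]`, the difference of the
two sides decreases to `0` at `x = a`: its derivative is
`-(a - x)³ G / (x (1 - x) (2x + a)² (3 - 2x - a)²)` with a quadratic `G ≥ 0`.
-/

open Real Finset Topology Set

-- at `a = 1` the junk value `log 0 = 0` is multiplied by `0`, as in the convention `0 log 0 = 0`
noncomputable def binaryKL (a x : ℝ) : ℝ :=
  a * (log a - log x) + (1 - a) * (log (1 - a) - log (1 - x))

theorem sum_range_choose_mul_pow_mul_one_sub_pow (N : ℕ) (x : ℝ) :
    ∑ j ∈ range (N + 1), (N.choose j : ℝ) * x ^ j * (1 - x) ^ (N - j) = 1 := by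
  calc _ = (x + (1 - x)) ^ N := by rw [add_pow]; exact sum_congr rfl fun j _ => by ring
    _ = 1 := by simp

theorem sum_Ico_choose_mul_pow_le {N k : ℕ} {x t : ℝ} (hx0 : 0 ≤ x) (hx1 : x ≤ 1)
    (ht : 1 ≤ t) :
    ∑ j ∈ Ico k (N + 1), (N.choose j : ℝ) * x ^ j * (1 - x) ^ (N - j)
      ≤ (x * t + (1 - x)) ^ N / t ^ k := by
  have h1x : 0 ≤ 1 - x := by linarith
  rw [le_div_iff₀ (by positivity), sum_mul, add_pow]
  calc ∑ j ∈ Ico k (N + 1), (N.choose j : ℝ) * x ^ j * (1 - x) ^ (N - j) * t ^ k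
      ≤ ∑ j ∈ Ico k (N + 1), (x * t) ^ j * (1 - x) ^ (N - j) * N.choose j := by
        refine sum_le_sum fun j hj => ?_
        calc (N.choose j : ℝ) * x ^ j * (1 - x) ^ (N - j) * t ^ k
            ≤ (N.choose j : ℝ) * x ^ j * (1 - x) ^ (N - j) * t ^ j := by
              gcongr
              exact (mem_Ico.mp hj).1
          _ = (x * t) ^ j * (1 - x) ^ (N - j) * N.choose j := by ring
    _ ≤ ∑ j ∈ range (N + 1), (x * t) ^ j * (1 - x) ^ (N - j) * N.choose j := by
        refine sum_le_sum_of_subset_of_nonneg ?_ fun j _ _ => by positivity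
        rw [range_eq_Ico]
        exact Ico_subset_Ico_left (Nat.zero_le k)

theorem binomial_tail_le_exp_neg_binaryKL {N k : ℕ} {x : ℝ} (hx : 0 < x) (hxk : x ≤ k / N)
    (hkN : k ≤ N) :
    ∑ j ∈ Ico k (N + 1), (N.choose j : ℝ) * x ^ j * (1 - x) ^ (N - j)
      ≤ exp (-(N * binaryKL (k / N) x)) := by
  have hN : (N : ℝ) ≠ 0 := by rintro h; rw [h, div_zero] at hxk; linarith
  rcases hkN.lt_or_eq with hkN | rfl
  · set a : ℝ := k / N
    have ha1 : a < 1 := by rw [div_lt_one (by positivity)]; exact_mod_cast hkN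
    have hx1 : x < 1 := hxk.trans_lt ha1
    have ha0 : 0 < a := hx.trans_le hxk
    have h1a : 0 < 1 - a := by linarith
    have h1x : 0 < 1 - x := by linarith
    have hka : (k : ℝ) = N * a := by simp only [a]; field_simp
    -- the `t` minimising the Chernoff bound
    have ht : 1 ≤ a * (1 - x) / (x * (1 - a)) := by
      rw [one_le_div (mul_pos hx h1a)]
      nlinarith
    refine (sum_Ico_choose_mul_pow_le hx.le hx1.le ht).trans_eq ?_
    have hmgf :
        x * (a * (1 - x) / (x * (1 - a))) + (1 - x) = exp (log (1 - x) - log (1 - a)) := by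
      rw [exp_sub, exp_log h1x, exp_log h1a]
      field_simp
      ring
    have ht_exp :
        a * (1 - x) / (x * (1 - a)) = exp (log a + log (1 - x) - log x - log (1 - a)) := by
      rw [exp_sub, exp_sub, exp_add, exp_log ha0, exp_log h1x, exp_log hx, exp_log h1a]
      field_simp
    rw [hmgf, ht_exp, ← exp_nat_mul, ← exp_nat_mul, ← exp_sub, hka, binaryKL]
    ring_nf
  · rw [Nat.Ico_succ_singleton, sum_singleton, div_self hN, binaryKL, ← exp_log (pow_pos hx _),
      log_pow]
    simp

theorem hasDerivAt_binaryKL (a : ℝ) {t : ℝ} (ht0 : 0 < t) (ht1 : t < 1) :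
    HasDerivAt (binaryKL a) ((t - a) / (t * (1 - t))) t := by
  have hlog : HasDerivAt (fun t => log (1 - t)) (-1 / (1 - t)) t := by
    simpa using ((hasDerivAt_id t).const_sub 1).log (by simp; linarith)
  have h := (((hasDerivAt_log ht0.ne').const_sub (log a)).const_mul a).add
    ((hlog.const_sub (log (1 - a))).const_mul (1 - a))
  refine h.congr_deriv ?_
  have : 1 - t ≠ 0 := by linarith
  field_simp
  ring

theorem continuous_binaryKL_left (x : ℝ) : Continuous fun a => binaryKL a x := by
  have h : Continuous fun a : ℝ => (1 - a) * log (1 - a) :=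
    continuous_mul_log.comp (continuous_const.sub continuous_id)
  simp only [binaryKL, mul_sub]
  fun_prop

theorem sq_div_le_binaryKL_of_lt_one {a x : ℝ} (hx : 0 < x) (hxa : x ≤ a) (ha : a < 1) :
    (a - x) ^ 2 / (2 * (2 / 3 * x + a / 3) * (1 - 2 / 3 * x - a / 3)) ≤ binaryKL a x := by
  set f : ℝ → ℝ := fun t =>
    binaryKL a t - (a - t) ^ 2 / (2 * (2 / 3 * t + a / 3) * (1 - 2 / 3 * t - a / 3))
  set f' : ℝ → ℝ := fun t =>
    -((a - t) ^ 3 * ((3 - 2 * t - a) ^ 2 - 3 * t * (3 - 4 * t - 2 * a)))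
      / (t * (1 - t) * (2 * t + a) ^ 2 * (3 - 2 * t - a) ^ 2)
  have hf' : ∀ t ∈ Icc x a, HasDerivAt f (f' t) t := by
    rintro t ⟨hxt, hta⟩
    have ht0 : 0 < t := hx.trans_le hxt
    have h1t : 1 - t ≠ 0 := by linarith
    have hden0 : 2 * (2 / 3 * t + a / 3) * (1 - 2 / 3 * t - a / 3) ≠ 0 := by
      have : 0 < 2 / 3 * t + a / 3 := by linarith
      have : 0 < 1 - 2 / 3 * t - a / 3 := by linarith
      positivity
    have hden : HasDerivAt (fun t => 2 * (2 / 3 * t + a / 3) * (1 - 2 / 3 * t - a / 3))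
        (4 / 9 * (3 - 4 * t - 2 * a)) t := by
      refine ((((hasDerivAt_id t).const_mul (2 / 3)).add_const (a / 3)).const_mul 2 |>.mul
        (((hasDerivAt_id t).const_mul (2 / 3)).const_sub 1 |>.sub_const (a / 3))).congr_deriv ?_
      simp only [id]
      ring
    have hnum : HasDerivAt (fun t => (a - t) ^ 2) (-2 * (a - t)) t := by
      refine (((hasDerivAt_id t).const_sub a).pow 2).congr_deriv ?_
      simp only [id]
      ring
    refine ((hasDerivAt_binaryKL a ht0 (by linarith)).sub (hnum.div hden hden0)).congr_deriv ?_
    have hs : t * 2 + a ≠ 0 := by linarith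
    have h3s : 3 - t * 2 - a ≠ 0 := by linarith
    simp only [f']
    field_simp
    ring
  have hf'_nonpos : ∀ t ∈ Icc x a, f' t ≤ 0 := by
    rintro t ⟨hxt, hta⟩
    have ht0 : 0 < t := hx.trans_le hxt
    have hG : 0 ≤ (3 - 2 * t - a) ^ 2 - 3 * t * (3 - 4 * t - 2 * a) := by
      rcases le_or_gt (3 - 4 * t - 2 * a) 0 with h | h
      · nlinarith [sq_nonneg (3 - 2 * t - a)]
      · nlinarith [sq_nonneg (2 * t + a - 3 / 2)]
    apply div_nonpos_of_nonpos_of_nonneg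
    · exact neg_nonpos_of_nonneg (mul_nonneg (pow_nonneg (by linarith) 3) hG)
    · exact mul_nonneg (mul_nonneg (mul_nonneg ht0.le (by linarith)) (sq_nonneg _)) (sq_nonneg _)
  have hanti : AntitoneOn f (Icc x a) :=
    antitoneOn_of_hasDerivWithinAt_nonpos (convex_Icc x a)
      (fun t ht => (hf' t ht).continuousAt.continuousWithinAt)
      (fun t ht => (hf' t (interior_subset ht)).hasDerivWithinAt)
      (fun t ht => hf'_nonpos t (interior_subset ht))
  have hfa : f a = 0 := by simp [f, binaryKL]
  have h := hanti ⟨le_rfl, hxa⟩ ⟨hxa, le_rfl⟩ hxa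
  rw [hfa] at h
  linarith

theorem sq_div_le_binaryKL {a x : ℝ} (hx : 0 < x) (hxa : x < a) (ha : a ≤ 1) :
    (a - x) ^ 2 / (2 * (2 / 3 * x + a / 3) * (1 - 2 / 3 * x - a / 3)) ≤ binaryKL a x := by
  rcases ha.lt_or_eq with ha | rfl
  · exact sq_div_le_binaryKL_of_lt_one hx hxa.le ha
  -- for `a = 1` the denominator vanishes at `x = a`, which breaks the monotonicity argument
  have hlhs : ContinuousAt
      (fun b => (b - x) ^ 2 / (2 * (2 / 3 * x + b / 3) * (1 - 2 / 3 * x - b / 3))) 1 :=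
    ContinuousAt.div (by fun_prop) (by fun_prop) (by nlinarith)
  refine le_of_tendsto_of_tendsto (b := 𝓝[<] 1) (hlhs.tendsto.mono_left nhdsWithin_le_nhds)
    (((continuous_binaryKL_left x).tendsto 1).mono_left nhdsWithin_le_nhds) ?_
  filter_upwards [Ioo_mem_nhdsLT hxa] with b hb
  exact sq_div_le_binaryKL_of_lt_one hx hb.1.le hb.2

theorem binomial_cdf_lower_bound_general
    (N : ℕ) (k : ℕ) (hkN : k ≤ N)
    (x : ℝ) (hx : x ∈ Set.Ioo (0 : ℝ) ((k : ℝ) / N)) :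
    1 - Real.exp (- (N * (x - (k : ℝ) / N) ^ 2) /
        (2 * (2 / 3 * x + k / (3 * N)) * (1 - 2 / 3 * x - k / (3 * N))))
    ≤ ∑ j ∈ Finset.range k, (N.choose j : ℝ) * x ^ j * (1 - x) ^ (N - j) := by
  obtain ⟨hx0, hxk⟩ := hx
  have hcdf_add_tail : ∑ j ∈ range k, (N.choose j : ℝ) * x ^ j * (1 - x) ^ (N - j)
      + ∑ j ∈ Ico k (N + 1), (N.choose j : ℝ) * x ^ j * (1 - x) ^ (N - j) = 1 := by
    rw [sum_range_add_sum_Ico _ (by omega), sum_range_choose_mul_pow_mul_one_sub_pow]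
  have htail := binomial_tail_le_exp_neg_binaryKL hx0 hxk.le hkN
  have hKL := sq_div_le_binaryKL hx0 hxk (div_le_one_of_le₀ (by exact_mod_cast hkN) N.cast_nonneg)
  have hexp : exp (-(N * binaryKL (k / N) x)) ≤ exp (-(N * (x - k / N) ^ 2) /
      (2 * (2 / 3 * x + k / (3 * N)) * (1 - 2 / 3 * x - k / (3 * N)))) := by
    rw [exp_le_exp, show (k : ℝ) / (3 * N) = k / N / 3 by ring, neg_div, neg_le_neg_iff,
      mul_div_assoc, ← neg_sub, neg_sq]
    gcongr
  linarith

/-- For `x ∈ (0, k/N)`, the binomial cdf at `k - 1` satisfies the Massart-type bound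
`∑_{j=0}^{k-1} C(N,j) x^j (1-x)^(N-j) ≥ 1 - exp(-N(x - k/N)² / (2((2/3)x + k/(3N))(1 - (2/3)x - k/(3N))))`. -/
theorem binomial_cdf_lower_bound
    (N : ℕ) (hN : 0 < N) (k : ℕ) (hk1 : 1 ≤ k) (hkN : k ≤ N)
    (x : ℝ) (hx : x ∈ Set.Ioo (0 : ℝ) ((k : ℝ) / N)) :
    1 - Real.exp (- (N * (x - (k : ℝ) / N) ^ 2) /
        (2 * (2 / 3 * x + k / (3 * N)) * (1 - 2 / 3 * x - k / (3 * N))))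
    ≤ ∑ j ∈ Finset.range k, (N.choose j : ℝ) * x ^ j * (1 - x) ^ (N - j) :=
  binomial_cdf_lower_bound_general N k hkN x hx
end

section
/- Let N be a positive integer, p ∈ (0,1), and ε > 0 with ε ≠ 3(1 − p). If K is a Binomial(N,p) random variable, then Pr{K/N ≥ p + ε} ≤ exp(− N ε² / (2 (p + ε/3)(1 − p − ε/3))); in particular Massart's upper-tail bound remains valid for all ε > 0, not only for ε ∈ (0, 1 − p). -/
/-!
For `p ≤ a ≤ 1`, exponential tilting (with `eᵗ = a(1-p)/((1-a)p)`; the case `a = 1` is direct)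
gives Chernoff's bound `Pr{K ≥ N a} ≤ exp(-N kl(a, p))`, where `kl` is the Kullback–Leibler
divergence between Bernoulli laws. For `ε ≤ 1 - p` it therefore suffices to prove Massart's
inequality `ε² / (2 (p + ε/3) (1 - p - ε/3)) ≤ kl(p + ε, p)`. Both sides vanish at `ε = 0`, and
the derivative of the right side, `log ((p+ε)/p) + log ((1-p)/(1-p-ε))`, dominates that of the left:
bounding each logarithm below by `log (x/y) ≥ 2(x-y)/(x+y)` leaves a polynomial inequality whose
defect is `ε³` times a quadratic that stays positive while `ε < 1 - p`. For `ε > 1 - p` the event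
is empty.
-/

open Real Finset

lemma two_mul_sub_div_add_le_log_div {a b : ℝ} (hb : 0 < b) (hba : b ≤ a) :
    2 * (a - b) / (a + b) ≤ log (a / b) := by
  have hab : 0 < a + b := by linarith
  have hx : (a - b) / (a + b) < 1 := by rw [div_lt_one hab]; linarith
  have key := Real.sum_range_le_log_div (div_nonneg (by linarith) hab.le) hx 1
  have hratio : (1 + (a - b) / (a + b)) / (1 - (a - b) / (a + b)) = a / b := by
    field_simp [hb.ne']
    ring
  rw [sum_range_one, hratio] at key
  simp only [mul_zero, zero_add, pow_one, Nat.cast_zero, div_one] at key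
  rw [mul_div_assoc]
  linarith

lemma continuous_mul_log_div (c : ℝ) : Continuous fun x ↦ x * log (x / c) := by
  rcases eq_or_ne c 0 with rfl | hc
  · simpa using continuous_const
  have h : (fun x ↦ x * log (x / c)) = fun x ↦ x * log x - x * log c := by
    funext x
    rcases eq_or_ne x 0 with rfl | hx
    · simp
    · rw [log_div hx hc, mul_sub]
  rw [h]
  exact continuous_mul_log.sub (continuous_mul_const _)

noncomputable def binomialTail (N : ℕ) (p a : ℝ) : ℝ :=
  ∑ k ∈ range (N + 1),
    if (N : ℝ) * a ≤ k then (N.choose k : ℝ) * p ^ k * (1 - p) ^ (N - k) else 0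

/-- At `a = 1` the second summand is `0 * log 0 = 0`, the usual convention. -/
noncomputable def bernoulliKL (a p : ℝ) : ℝ :=
  a * log (a / p) + (1 - a) * log ((1 - a) / (1 - p))

noncomputable def massartExponent (p ε : ℝ) : ℝ :=
  ε ^ 2 / (2 * (p + ε / 3) * (1 - p - ε / 3))

lemma binomialTail_le_exp_mul_add_pow (N : ℕ) {p : ℝ} (hp0 : 0 ≤ p) (hp1 : p ≤ 1) (a : ℝ)
    {t : ℝ} (ht : 0 ≤ t) :
    binomialTail N p a ≤ (exp (-(t * a)) * (p * exp t + (1 - p))) ^ N := by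
  have hexp : ∀ k : ℕ, exp (t * (k - N * a)) = exp t ^ k * exp (-(t * a)) ^ N := by
    intro k
    rw [← exp_nat_mul, ← exp_nat_mul, ← exp_add]
    ring_nf
  calc binomialTail N p a
      ≤ ∑ k ∈ range (N + 1),
          (N.choose k : ℝ) * p ^ k * (1 - p) ^ (N - k) * exp (t * (k - N * a)) := by
        refine sum_le_sum fun k _ ↦ ?_
        have hterm : 0 ≤ (N.choose k : ℝ) * p ^ k * (1 - p) ^ (N - k) := by
          have : 0 ≤ 1 - p := by linarith
          positivity
        split_ifs with hk
        · exact le_mul_of_one_le_right hterm (one_le_exp (by nlinarith))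
        · positivity
    _ = (exp (-(t * a)) * (p * exp t + (1 - p))) ^ N := by
        simp only [hexp, mul_pow, add_pow, mul_sum]
        refine sum_congr rfl fun k _ ↦ ?_
        ring

lemma binomialTail_one (N : ℕ) (p : ℝ) : binomialTail N p 1 = p ^ N := by
  rw [binomialTail, sum_eq_single_of_mem N (self_mem_range_succ N)]
  · simp
  · intro k hk hkN
    have : k < N := lt_of_le_of_ne (mem_range_succ_iff.mp hk) hkN
    rw [if_neg (by rw [mul_one]; exact_mod_cast this.not_ge)]

lemma binomialTail_eq_zero_of_one_lt {N : ℕ} (hN : 0 < N) (p : ℝ) {a : ℝ} (ha : 1 < a) :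
    binomialTail N p a = 0 := by
  refine sum_eq_zero fun k hk ↦ if_neg (not_le.mpr ?_)
  have hkN : (k : ℝ) ≤ N := by exact_mod_cast mem_range_succ_iff.mp hk
  have hN1 : (1 : ℝ) ≤ N := by exact_mod_cast hN
  nlinarith

lemma binomialTail_le_exp_neg_mul_bernoulliKL (N : ℕ) {p a : ℝ} (hp : 0 < p) (hpa : p ≤ a)
    (ha : a ≤ 1) : binomialTail N p a ≤ exp (-(N * bernoulliKL a p)) := by
  rw [← mul_neg, exp_nat_mul]
  rcases ha.lt_or_eq with ha | rfl
  · have ha0 : 0 < a := by linarith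
    have hb : 0 < 1 - a := by linarith
    have hq : 0 < 1 - p := by linarith
    have ht : 0 ≤ log (a / p) - log ((1 - a) / (1 - p)) := by
      have h1 : 0 ≤ log (a / p) := log_nonneg ((one_le_div hp).mpr hpa)
      have h2 : log ((1 - a) / (1 - p)) ≤ 0 :=
        log_nonpos (by positivity) ((div_le_one hq).mpr (by linarith))
      linarith
    convert binomialTail_le_exp_mul_add_pow N hp.le (by linarith) a ht using 2
    have hexp : p * exp (log (a / p) - log ((1 - a) / (1 - p))) + (1 - p)
        = exp (-log ((1 - a) / (1 - p))) := by
      rw [exp_sub, exp_log (by positivity), exp_log (by positivity), exp_neg,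
        exp_log (by positivity)]
      field_simp
      ring
    rw [hexp, ← exp_add, bernoulliKL]
    ring_nf
  · simp [binomialTail_one, bernoulliKL, exp_log hp]

lemma continuous_bernoulliKL (p : ℝ) : Continuous fun a ↦ bernoulliKL a p :=
  (continuous_mul_log_div p).add
    ((continuous_mul_log_div (1 - p)).comp (continuous_const.sub continuous_id))

lemma hasDerivAt_bernoulliKL {a p : ℝ} (ha0 : a ≠ 0) (ha1 : a ≠ 1) (hp0 : p ≠ 0)
    (hp1 : p ≠ 1) :
    HasDerivAt (fun x ↦ bernoulliKL x p) (log (a / p) - log ((1 - a) / (1 - p))) a := by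
  have hb : 1 - a ≠ 0 := sub_ne_zero.mpr (Ne.symm ha1)
  have hq : 1 - p ≠ 0 := sub_ne_zero.mpr (Ne.symm hp1)
  have h1 := (hasDerivAt_id a).mul (((hasDerivAt_id a).div_const p).log (div_ne_zero ha0 hp0))
  have h2 := ((hasDerivAt_id a).const_sub 1).mul
    ((((hasDerivAt_id a).const_sub 1).div_const (1 - p)).log (div_ne_zero hb hq))
  refine (h1.add h2).congr_deriv ?_
  simp only [id]
  field_simp
  ring

lemma deriv_massartExponent_le {p s : ℝ} (hp : 0 < p) (hs : 0 < s) (hsp : s < 1 - p) :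
    deriv (massartExponent p) s ≤ 2 * s / (2 * p + s) + 2 * s / (2 * (1 - p) - s) := by
  have hu : 0 < p + s / 3 := by positivity
  have hv : 2 * s / 3 < 1 - p - s / 3 := by linarith
  have hv0 : 0 < 1 - p - s / 3 := by linarith
  have hM : HasDerivAt (massartExponent p) (s * (6 * (p + s / 3) * (1 - p - s / 3)
      - s * ((1 - p - s / 3) - (p + s / 3))) / (6 * (p + s / 3) ^ 2 * (1 - p - s / 3) ^ 2)) s := by
    have hd := ((((hasDerivAt_id s).div_const 3).const_add p).const_mul 2).fun_mul
      (((hasDerivAt_id s).div_const 3).const_sub (1 - p))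
    have hd0 : 2 * (p + id s / 3) * (1 - p - id s / 3) ≠ 0 :=
      (mul_pos (mul_pos two_pos hu) hv0).ne'
    refine ((hasDerivAt_pow 2 s).div hd hd0).congr_deriv ?_
    simp only [id]
    field_simp
    ring
  rw [hM.deriv, div_add_div _ _ (by positivity) (by linarith),
    div_le_div_iff₀ (by positivity) (by nlinarith)]
  set u := p + s / 3
  set v := 1 - p - s / 3
  have hpos : 0 ≤ 6 * (u ^ 2 - u * v + v ^ 2) - s * (v - u) := by
    nlinarith [sq_nonneg (u - v / 2)]
  have hdiff : (2 * s * (2 * (1 - p) - s) + (2 * p + s) * (2 * s)) * (6 * u ^ 2 * v ^ 2)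
      - s * (6 * u * v - s * (v - u)) * ((2 * p + s) * (2 * (1 - p) - s))
      = s ^ 3 * (6 * (u ^ 2 - u * v + v ^ 2) - s * (v - u)) / 9 := by
    simp only [u, v]
    ring
  have : 0 ≤ s ^ 3 * (6 * (u ^ 2 - u * v + v ^ 2) - s * (v - u)) / 9 := by positivity
  linarith

lemma two_mul_div_add_two_mul_div_le_log_div_sub_log_div {p s : ℝ} (hp : 0 < p) (hs : 0 ≤ s)
    (hsp : s < 1 - p) :
    2 * s / (2 * p + s) + 2 * s / (2 * (1 - p) - s) ≤
      log ((p + s) / p) - log ((1 - (p + s)) / (1 - p)) := by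
  have hlog₁ : 2 * s / (2 * p + s) ≤ log ((p + s) / p) := by
    convert two_mul_sub_div_add_le_log_div hp (le_add_of_nonneg_right hs) using 2 <;> ring
  have hlog₂ : 2 * s / (2 * (1 - p) - s) ≤ -log ((1 - (p + s)) / (1 - p)) := by
    rw [← log_inv, inv_div]
    convert two_mul_sub_div_add_le_log_div (a := 1 - p) (b := 1 - (p + s)) (by linarith)
      (by linarith) using 2 <;> ring
  linarith

lemma massartExponent_le_bernoulliKL {p ε : ℝ} (hp : 0 < p) (hε : 0 < ε) (hεp : ε ≤ 1 - p) :
    massartExponent p ε ≤ bernoulliKL (p + ε) p := by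
  let f : ℝ → ℝ := fun s ↦ bernoulliKL (p + s) p - massartExponent p s
  have hden : ∀ s ∈ Set.Icc 0 ε, 2 * (p + s / 3) * (1 - p - s / 3) ≠ 0 := fun s hs ↦
    (mul_pos (mul_pos two_pos (by linarith [hs.1])) (by linarith [hs.2])).ne'
  have hcont : ContinuousOn f (Set.Icc 0 ε) := by
    have hkl := (continuous_bernoulliKL p).comp (continuous_const_add p)
    exact hkl.continuousOn.sub (ContinuousOn.div (by fun_prop) (by fun_prop) hden)
  have hderiv : ∀ s ∈ Set.Ioo 0 ε, HasDerivAt f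
      (log ((p + s) / p) - log ((1 - (p + s)) / (1 - p)) - deriv (massartExponent p) s) s := by
    intro s hs
    have hkl := (hasDerivAt_bernoulliKL (a := p + s) (p := p) (by linarith [hs.1])
      (by linarith [hs.2]) hp.ne' (by linarith)).comp_const_add p s
    have hM : DifferentiableAt ℝ (massartExponent p) s :=
      DifferentiableAt.div (by fun_prop) (by fun_prop) (hden s (Set.Ioo_subset_Icc_self hs))
    exact hkl.sub hM.hasDerivAt
  have hmono : MonotoneOn f (Set.Icc 0 ε) := by
    refine monotoneOn_of_hasDerivWithinAt_nonneg (convex_Icc 0 ε) hcont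
      (fun s hs ↦ (hderiv s (by rwa [interior_Icc] at hs)).hasDerivWithinAt) fun s hs ↦ ?_
    obtain ⟨hs0, hsε⟩ : s ∈ Set.Ioo 0 ε := by rwa [interior_Icc] at hs
    linarith [deriv_massartExponent_le hp hs0 (by linarith),
      two_mul_div_add_two_mul_div_le_log_div_sub_log_div hp hs0.le (by linarith)]
  have hf0 : f 0 = 0 := by simp [f, bernoulliKL, massartExponent]
  have h := hmono ⟨le_rfl, hε.le⟩ ⟨hε.le, le_rfl⟩ hε.le
  rw [hf0] at h
  exact sub_nonneg.mp h

theorem massart_upper_tail_all_eps_general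
    (N : ℕ) (hN : 0 < N) (p : ℝ) (hp : p ∈ Set.Ioo (0:ℝ) 1)
    (ε : ℝ) (hε : 0 < ε) :
    ∑ k ∈ Finset.range (N + 1),
      (if (N : ℝ) * (p + ε) ≤ k then (N.choose k : ℝ) * p ^ k * (1 - p) ^ (N - k) else 0)
    ≤ Real.exp (- (N * ε ^ 2) / (2 * (p + ε / 3) * (1 - p - ε / 3))) := by
  change binomialTail N p (p + ε) ≤ _
  rcases le_or_gt ε (1 - p) with hεp | hεp
  · calc binomialTail N p (p + ε) ≤ exp (-(N * bernoulliKL (p + ε) p)) :=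
          binomialTail_le_exp_neg_mul_bernoulliKL N hp.1 (by linarith) (by linarith)
      _ ≤ exp (-(N * massartExponent p ε)) := by
          gcongr
          exact massartExponent_le_bernoulliKL hp.1 hε hεp
      _ = exp (-(N * ε ^ 2) / (2 * (p + ε / 3) * (1 - p - ε / 3))) := by
          rw [massartExponent, neg_div, mul_div_assoc]
  · rw [binomialTail_eq_zero_of_one_lt hN p (by linarith)]
    positivity

/-- Massart's upper-tail bound remains valid for all `ε > 0` (with `ε ≠ 3(1 - p)` so
that the right-hand side is well defined), not only for `ε ∈ (0, 1 - p)`. -/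
theorem massart_upper_tail_all_eps
    (N : ℕ) (hN : 0 < N) (p : ℝ) (hp : p ∈ Set.Ioo (0:ℝ) 1)
    (ε : ℝ) (hε : 0 < ε) (hε' : ε ≠ 3 * (1 - p)) :
    ∑ k ∈ Finset.range (N + 1),
      (if (N : ℝ) * (p + ε) ≤ k then (N.choose k : ℝ) * p ^ k * (1 - p) ^ (N - k) else 0)
    ≤ Real.exp (- (N * ε ^ 2) / (2 * (p + ε / 3) * (1 - p - ε / 3))) :=
  massart_upper_tail_all_eps_general N hN p hp ε hε
end
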